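/- arXiv:2603.15494 — 5 statements merged into one kernel-verified Lean document; each statement's English description precedes it below -/
import Mathlib

section
/- Let f : ℝ^d → ℝ be twice continuously differentiable with L_H-Lipschitz continuous Hessian. If x̄ is a critical point of f such that all singular values of ∇²f(x̄) are at least μ > 0, and c ∈ [0,1], x ∈ ℝ^d satisfy ‖x - x̄‖ ≤ (μ/L_H)·c, then ‖∇f(x)‖ ≥ μ(1 - c/2)‖x - x̄‖. -/
open RealInnerProductSpace

/-- Lower bound on the gradient norm near a nondegenerate critical point
(Lemma `growth_mu` (i), first part). -/
theorem gradient_lower_bound_near_nondegenerate_critical_point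
    {d : ℕ} (f : EuclideanSpace ℝ (Fin d) → ℝ)
    (Hf : EuclideanSpace ℝ (Fin d) → EuclideanSpace ℝ (Fin d) →L[ℝ] EuclideanSpace ℝ (Fin d))
    (L_H μ : ℝ) (hμ : 0 < μ)
    (hf : ContDiff ℝ 2 f)
    (hHf : ∀ x, HasFDerivAt (gradient f) (Hf x) x)
    (hLip : ∀ x y, ‖Hf x - Hf y‖ ≤ L_H * ‖x - y‖)
    (xbar : EuclideanSpace ℝ (Fin d)) (hcrit : gradient f xbar = 0)
    (hsv : ∀ u, μ * ‖u‖ ≤ ‖Hf xbar u‖)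
    (c : ℝ) (hc0 : 0 ≤ c) (hc1 : c ≤ 1)
    (x : EuclideanSpace ℝ (Fin d)) (hx : ‖x - xbar‖ ≤ μ / L_H * c) :
    μ * (1 - c / 2) * ‖x - xbar‖ ≤ ‖gradient f x‖ := by
  by_cases hxe : x = xbar
  · subst hxe
    simp only [sub_self, norm_zero, mul_zero]
    exact norm_nonneg _
  have hv : (0:ℝ) < ‖x - xbar‖ := by
    rw [norm_pos_iff]
    exact sub_ne_zero.mpr hxe
  -- L_H must be positive
  have hL : 0 < L_H := by
    by_contra h
    push_neg at h
    have h1 : μ / L_H * c ≤ 0 := by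
      rcases lt_or_eq_of_le h with h' | h'
      · exact mul_nonpos_of_nonpos_of_nonneg (le_of_lt (div_neg_of_pos_of_neg hμ h')) hc0
      · rw [h', div_zero, zero_mul]
    linarith [hx, hv]
  set v := x - xbar with hvdef
  set γ : ℝ → EuclideanSpace ℝ (Fin d) := fun t => xbar + t • v with hγ
  have hγ0 : γ 0 = xbar := by simp [hγ]
  have hγ1 : γ 1 = x := by simp [hγ, hvdef]
  have hγderiv : ∀ t : ℝ, HasDerivAt γ v t := by
    intro t
    have : HasDerivAt (fun t : ℝ => t • v) ((1:ℝ) • v) t :=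
      (hasDerivAt_id t).smul_const v
    simpa [hγ] using this.const_add xbar
  have hφderiv : ∀ t : ℝ, HasDerivAt (fun s => gradient f (γ s)) (Hf (γ t) v) t := by
    intro t
    exact (hHf (γ t)).comp_hasDerivAt t (hγderiv t)
  -- continuity of Hf (Lipschitz)
  have hHfLip : LipschitzWith (Real.toNNReal L_H) Hf := by
    apply LipschitzWith.of_dist_le_mul
    intro a b
    rw [dist_eq_norm]
    calc ‖Hf a - Hf b‖ ≤ L_H * ‖a - b‖ := hLip a b
      _ = (Real.toNNReal L_H : ℝ) * dist a b := by
          rw [Real.coe_toNNReal _ hL.le, dist_eq_norm]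
  have hγcont : Continuous γ := by
    apply Continuous.add continuous_const
    exact continuous_id.smul continuous_const
  have hcont : Continuous fun t : ℝ => Hf (γ t) v :=
    ((hHfLip.continuous.comp hγcont)).clm_apply continuous_const
  have hIntegrable : IntervalIntegrable (fun t : ℝ => Hf (γ t) v) MeasureTheory.volume 0 1 :=
    hcont.intervalIntegrable 0 1
  -- fundamental theorem of calculus
  have hFTC : ∫ t in (0:ℝ)..1, Hf (γ t) v = gradient f x := by
    rw [intervalIntegral.integral_eq_sub_of_hasDerivAt
      (fun t _ => hφderiv t) hIntegrable]
    rw [hγ0, hγ1, hcrit, sub_zero]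
  -- the error term
  have hconstInt : IntervalIntegrable (fun _ : ℝ => Hf xbar v) MeasureTheory.volume 0 1 :=
    intervalIntegrable_const
  have hErr : gradient f x - Hf xbar v = ∫ t in (0:ℝ)..1, (Hf (γ t) v - Hf xbar v) := by
    rw [intervalIntegral.integral_sub hIntegrable hconstInt, hFTC,
      intervalIntegral.integral_const]
    simp
  have hbound : ∀ t ∈ Set.Icc (0:ℝ) 1, ‖Hf (γ t) v - Hf xbar v‖ ≤ L_H * ‖v‖ ^ 2 * t := by
    intro t ht
    have h1 : Hf (γ t) v - Hf xbar v = (Hf (γ t) - Hf xbar) v := by simp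
    rw [h1]
    calc ‖(Hf (γ t) - Hf xbar) v‖ ≤ ‖Hf (γ t) - Hf xbar‖ * ‖v‖ :=
          (Hf (γ t) - Hf xbar).le_opNorm v
      _ ≤ L_H * ‖γ t - xbar‖ * ‖v‖ := by
          have := hLip (γ t) xbar
          exact mul_le_mul_of_nonneg_right this (norm_nonneg v)
      _ = L_H * ‖v‖ ^ 2 * t := by
          have : γ t - xbar = t • v := by simp [hγ]
          rw [this, norm_smul, Real.norm_eq_abs, abs_of_nonneg ht.1]
          ring
  have hnormErr : ‖gradient f x - Hf xbar v‖ ≤ L_H * ‖v‖ ^ 2 / 2 := by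
    rw [hErr]
    have h2 : ∫ t in (0:ℝ)..1, L_H * ‖v‖ ^ 2 * t = L_H * ‖v‖ ^ 2 / 2 := by
      rw [intervalIntegral.integral_const_mul, integral_id]
      ring
    calc ‖∫ t in (0:ℝ)..1, (Hf (γ t) v - Hf xbar v)‖
        ≤ ∫ t in (0:ℝ)..1, ‖Hf (γ t) v - Hf xbar v‖ :=
          intervalIntegral.norm_integral_le_integral_norm zero_le_one
      _ ≤ ∫ t in (0:ℝ)..1, L_H * ‖v‖ ^ 2 * t := by
          apply intervalIntegral.integral_mono_on zero_le_one
          · exact (hIntegrable.sub hconstInt).norm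
          · exact (intervalIntegrable_const.mul_continuousOn
              (Continuous.continuousOn continuous_id))
          · exact hbound
      _ = L_H * ‖v‖ ^ 2 / 2 := h2
  have hlow : μ * ‖v‖ - L_H * ‖v‖ ^ 2 / 2 ≤ ‖gradient f x‖ := by
    have h3 : ‖Hf xbar v‖ ≤ ‖gradient f x‖ + ‖gradient f x - Hf xbar v‖ := by
      have := norm_sub_le (gradient f x) (gradient f x - Hf xbar v)
      simpa using this
    linarith [hsv v, hnormErr]
  have hxv : L_H * ‖v‖ ≤ μ * c := by
    calc L_H * ‖v‖ ≤ L_H * (μ / L_H * c) := by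
          exact mul_le_mul_of_nonneg_left hx hL.le
      _ = μ * c := by field_simp
  nlinarith [hv, norm_nonneg v]
end

section
/- Let H ∈ Sym_d, g ∈ ℝ^d, Δ > 0, and v ∈ ℝ^d with ‖v‖ ≤ Δ/2. Let m(w) = ⟨g, w⟩ + (1/2)⟨w, Hw⟩ and r = -(Hv + g) = -∇m(v). Define u by: if ⟨r, Hr⟩ > 0 and ‖v + (‖r‖²/⟨r, Hr⟩)·r‖ < Δ, set u = v + (‖r‖²/⟨r, Hr⟩)·r (and then m(v) - m(u) ≥ ‖r‖²/(2L_G)); otherwise set u = v + s'·r with s' ≥ 0 such that ‖u‖ = Δ (and then m(v) - m(u) ≥ (Δ/4)·‖r‖). Here L_G bounds the operator norm of H. -/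
/-!
Along the ray `s ↦ v + s • r` the model is the parabola `m v - s ‖r‖² + (s²/2) ⟪r, H r⟫`.
Its exact minimiser `s* = ‖r‖² / ⟪r, H r⟫` gains `‖r‖⁴ / (2 ⟪r, H r⟫) ≥ ‖r‖² / (2 L_G)`.
When the step stops at the boundary instead, convexity of the norm along the ray shows that the
step `s'` does not overshoot `s*`, so it gains at least `s' ‖r‖² / 2`, and `s' ‖r‖ ≥ Δ / 2`
because the ray starts in the ball of radius `Δ / 2`.
-/

open RealInnerProductSpace

variable {E : Type*} [NormedAddCommGroup E] [InnerProductSpace ℝ E]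

/-- The quadratic model `w ↦ ⟪g, w⟫ + ½ ⟪w, H w⟫`, whose gradient at `v` is `H v + g`. -/
noncomputable def quadModel (g : E) (H : E →L[ℝ] E) (w : E) : ℝ :=
  ⟪g, w⟫ + (1 / 2) * ⟪w, H w⟫

theorem quadModel_add_smul {H : E →L[ℝ] E} (hH : (H : E →ₗ[ℝ] E).IsSymmetric)
    (g v p : E) (s : ℝ) :
    quadModel g H (v + s • p) = quadModel g H v + s * ⟪H v + g, p⟫ + s ^ 2 / 2 * ⟪p, H p⟫ := by
  have hvp : ⟪v, H p⟫ = ⟪H v, p⟫ := (hH v p).symm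
  simp only [quadModel, map_add, map_smul, inner_add_left, inner_add_right,
    real_inner_smul_left, real_inner_smul_right, hvp]
  rw [real_inner_comm p (H v)]
  ring

theorem inner_apply_self_le {H : E →L[ℝ] E} {L : ℝ} (hH : ‖H‖ ≤ L) (x : E) :
    ⟪x, H x⟫ ≤ L * ‖x‖ ^ 2 :=
  calc ⟪x, H x⟫ ≤ ‖x‖ * ‖H x‖ := real_inner_le_norm x (H x)
    _ ≤ ‖x‖ * (‖H‖ * ‖x‖) := by gcongr; exact H.le_opNorm x
    _ ≤ L * ‖x‖ ^ 2 := by nlinarith [norm_nonneg x]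

/-- A point of the open segment from inside an open ball to its closure lies inside the ball. -/
theorem norm_add_smul_lt_of_lt {v r : E} {Δ s t : ℝ} (hv : ‖v‖ < Δ) (hs : ‖v + s • r‖ ≤ Δ)
    (ht : 0 ≤ t) (hts : t < s) : ‖v + t • r‖ < Δ := by
  have hs₀ : 0 < s := ht.trans_lt hts
  set θ := t / s
  have hθ₀ : 0 ≤ θ := div_nonneg ht hs₀.le
  have hθ₁ : θ < 1 := (div_lt_one hs₀).mpr hts
  have hcomb : v + t • r = (1 - θ) • v + θ • (v + s • r) := by
    rw [smul_add, smul_smul, div_mul_cancel₀ t hs₀.ne']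
    module
  calc ‖v + t • r‖ ≤ (1 - θ) * ‖v‖ + θ * ‖v + s • r‖ := by
        rw [hcomb]
        refine (norm_add_le _ _).trans_eq ?_
        rw [norm_smul, norm_smul, Real.norm_of_nonneg (by linarith), Real.norm_of_nonneg hθ₀]
    _ < Δ := by nlinarith

theorem div_two_mul_le_exact_step_decrease {a c L : ℝ} (ha : 0 ≤ a) (hc : 0 < c)
    (hcL : c ≤ L * a) : a / (2 * L) ≤ a / c * a - (a / c) ^ 2 / 2 * c := by
  have ha₀ : 0 < a := ha.lt_of_ne (by rintro rfl; linarith)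
  have hL : 0 < L := pos_of_mul_pos_left (hc.trans_le hcL) ha
  calc a / (2 * L) ≤ a * a / (2 * c) := by
        rw [div_le_div_iff₀ (by positivity) (by positivity)]
        nlinarith
    _ = _ := by field_simp; ring

theorem mul_le_truncated_step_decrease {n c s Δ : ℝ} (hn : 0 ≤ n) (hs : 0 ≤ s)
    (hsc : s * c ≤ n ^ 2) (hreach : Δ / 2 ≤ s * n) : Δ / 4 * n ≤ s * n ^ 2 - s ^ 2 / 2 * c :=
  calc Δ / 4 * n ≤ s * n ^ 2 / 2 := by nlinarith
    _ ≤ s * n ^ 2 - s ^ 2 / 2 * c := by nlinarith [mul_le_mul_of_nonneg_left hsc hs]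

/-- Decrease guarantee for the boundary gradient step (Lemma `cauchy_step`):
an exact line search on the quadratic model `m` along the negative model gradient `r`
from `v` (with `‖v‖ ≤ Δ/2`), truncated to the ball of radius `Δ`, decreases `m`
by `‖r‖²/(2L_G)` in the interior case and by `(Δ/4)‖r‖` when hitting the boundary. -/
theorem boundary_gradient_step_decrease
    {d : ℕ} (H : EuclideanSpace ℝ (Fin d) →L[ℝ] EuclideanSpace ℝ (Fin d))
    (hsymm : ∀ a b, ⟪H a, b⟫ = ⟪a, H b⟫)
    (L_G : ℝ) (hH : ‖H‖ ≤ L_G)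
    (g v r : EuclideanSpace ℝ (Fin d)) (Δ : ℝ) (hΔ : 0 < Δ) (hv : ‖v‖ ≤ Δ / 2)
    (m : EuclideanSpace ℝ (Fin d) → ℝ)
    (hm : ∀ w, m w = ⟪g, w⟫ + (1 / 2) * ⟪w, H w⟫)
    (hr : r = -(H v + g)) :
    (0 < ⟪r, H r⟫ → ‖v + (‖r‖ ^ 2 / ⟪r, H r⟫) • r‖ < Δ →
      ‖r‖ ^ 2 / (2 * L_G) ≤ m v - m (v + (‖r‖ ^ 2 / ⟪r, H r⟫) • r)) ∧
    (¬(0 < ⟪r, H r⟫ ∧ ‖v + (‖r‖ ^ 2 / ⟪r, H r⟫) • r‖ < Δ) →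
      ∀ s' : ℝ, 0 ≤ s' → ‖v + s' • r‖ = Δ →
        Δ / 4 * ‖r‖ ≤ m v - m (v + s' • r)) := by
  obtain rfl : m = quadModel g H := funext hm
  have hdecrease (s : ℝ) :
      quadModel g H v - quadModel g H (v + s • r) = s * ‖r‖ ^ 2 - s ^ 2 / 2 * ⟪r, H r⟫ := by
    have hgrad : H v + g = -r := by rw [hr, neg_neg]
    rw [quadModel_add_smul hsymm, hgrad, inner_neg_left, real_inner_self_eq_norm_sq]
    ring
  have hcurv := inner_apply_self_le hH r
  refine ⟨fun hc _ ↦ ?_, fun hcond s' hs' hnorm ↦ ?_⟩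
  · rw [hdecrease]
    exact div_two_mul_le_exact_step_decrease (sq_nonneg _) hc hcurv
  · have hreach : Δ / 2 ≤ s' * ‖r‖ := by
      have := hnorm ▸ norm_add_le v (s' • r)
      rw [norm_smul, Real.norm_of_nonneg hs'] at this
      linarith
    have hno_overshoot : s' * ⟪r, H r⟫ ≤ ‖r‖ ^ 2 := by
      rcases le_or_gt ⟪r, H r⟫ 0 with hc | hc
      · nlinarith [sq_nonneg ‖r‖]
      · rw [← le_div_iff₀ hc]
        by_contra! hover
        exact hcond ⟨hc, norm_add_smul_lt_of_lt (by linarith) hnorm.le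
          (div_nonneg (sq_nonneg _) hc.le) hover⟩
    rw [hdecrease]
    exact mul_le_truncated_step_decrease (norm_nonneg r) hs' hno_overshoot hreach
end

section
/- Let f : ℝ^d → ℝ be C² with L_G-Lipschitz gradient and L_H-Lipschitz Hessian, and let x̄ be a critical point whose Hessian singular values are all at least μ > 0. Suppose ‖x - x̄‖ ≤ R with R ≤ min(μ²/(4L_H L_G), μ/(8ω₂L_G²)) for some ω₂ > 0, and suppose x₊ = x + u where u satisfies ‖∇²f(x)u + ∇f(x)‖ ≤ ω₂‖∇f(x)‖². Then ‖x₊ - x̄‖ ≤ ‖x - x̄‖²/(2R) ≤ ‖x - x̄‖/2 ≤ R/2. -/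
/-!
Write `e = ‖x - x̄‖`. Near `x̄` the Hessian `∇²f(x)` stays uniformly invertible: it differs from
`∇²f(x̄)` by at most `L_H e ≤ μ/4`, so `‖∇²f(x) v‖ ≥ (3μ/4)‖v‖`. Applying it to the error
`x₊ - x̄ = (x - x̄) + u` splits the image into the Taylor remainder of `∇f` between `x` and `x̄`,
of size `≤ L_H e²`, and the Newton residual, of size `≤ ω₂ ‖∇f(x)‖² ≤ ω₂ L_G² e²`. The bounds on `R`
(together with `μ ≤ ‖∇²f(x̄)‖ ≤ L_G`) make `(3μ/4)⁻¹ (L_H + ω₂ L_G²) ≤ 1/(2R)`.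
-/

open RealInnerProductSpace

section

variable {E F : Type*} [NormedAddCommGroup E] [NormedSpace ℝ E]
  [NormedAddCommGroup F] [NormedSpace ℝ F]

theorem ContinuousLinearMap.le_opNorm_of_forall_mul_norm_le [Nontrivial E] {A : E →L[ℝ] F}
    {μ : ℝ} (hA : ∀ v, μ * ‖v‖ ≤ ‖A v‖) : μ ≤ ‖A‖ := by
  obtain ⟨v, hv⟩ := exists_ne (0 : E)
  have hv' : 0 < ‖v‖ := norm_pos_iff.mpr hv
  exact le_of_mul_le_mul_right ((hA v).trans (A.le_opNorm v)) hv'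

theorem ContinuousLinearMap.sub_mul_norm_le_norm_apply {A B : E →L[ℝ] F} {μ δ : ℝ}
    (hA : ∀ v, μ * ‖v‖ ≤ ‖A v‖) (hAB : ‖A - B‖ ≤ δ) (v : E) : (μ - δ) * ‖v‖ ≤ ‖B v‖ := by
  have hdiff : ‖A v - B v‖ ≤ δ * ‖v‖ :=
    ((A - B).le_opNorm v).trans (mul_le_mul_of_nonneg_right hAB (norm_nonneg v))
  have htri : ‖A v‖ ≤ ‖B v‖ + ‖A v - B v‖ := norm_le_insert' (A v) (B v)
  nlinarith [hA v]

theorem norm_image_sub_sub_fderiv_le_of_lipschitz {g : E → F} {g' : E → E →L[ℝ] F} {L : ℝ}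
    (hL : 0 ≤ L) (hg : ∀ z, HasFDerivAt g (g' z) z)
    (hLip : ∀ y z, ‖g' y - g' z‖ ≤ L * ‖y - z‖) (x y : E) :
    ‖g y - g x - g' x (y - x)‖ ≤ L * ‖y - x‖ ^ 2 := by
  have hbound : ∀ z ∈ Metric.closedBall x ‖y - x‖, ‖g' z - g' x‖ ≤ L * ‖y - x‖ := fun z hz =>
    (hLip z x).trans (mul_le_mul_of_nonneg_left (mem_closedBall_iff_norm.mp hz) hL)
  have hmvt := (convex_closedBall x ‖y - x‖).norm_image_sub_le_of_norm_hasFDerivWithin_le'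
    (fun z _ => (hg z).hasFDerivWithinAt) hbound (Metric.mem_closedBall_self (norm_nonneg _))
    (mem_closedBall_iff_norm.mpr le_rfl)
  rwa [mul_assoc, ← sq] at hmvt

theorem mul_norm_add_sub_le_of_map_eq_zero {g : E → F} {B : E →L[ℝ] F} {c : ℝ} {x xbar u : E}
    (hB : ∀ v, c * ‖v‖ ≤ ‖B v‖) (hxbar : g xbar = 0) :
    c * ‖x + u - xbar‖ ≤ ‖g xbar - g x - B (xbar - x)‖ + ‖B u + g x‖ := by
  have hsplit : B (x + u - xbar) = (g xbar - g x - B (xbar - x)) + (B u + g x) := by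
    simp only [map_sub, map_add, hxbar]
    abel
  exact (hB _).trans (hsplit ▸ norm_add_le _ _)

theorem mul_norm_inexact_newton_step_sub_le {g : E → F} {g' : E → E →L[ℝ] F}
    {L_G L_H μ ω₂ : ℝ} (hLH : 0 ≤ L_H) (hg : ∀ z, HasFDerivAt g (g' z) z)
    (hLipG : ∀ y z, ‖g y - g z‖ ≤ L_G * ‖y - z‖) (hLipH : ∀ y z, ‖g' y - g' z‖ ≤ L_H * ‖y - z‖)
    {xbar x u : E} (hxbar : g xbar = 0) (hsv : ∀ v, μ * ‖v‖ ≤ ‖g' xbar v‖)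
    (hclose : L_H * ‖x - xbar‖ ≤ μ / 4) (hu : ‖g' x u + g x‖ ≤ ω₂ * ‖g x‖ ^ 2) (hω : 0 ≤ ω₂) :
    3 * μ / 4 * ‖x + u - xbar‖ ≤ (L_H + ω₂ * L_G ^ 2) * ‖x - xbar‖ ^ 2 := by
  have hcoerc : ∀ v, 3 * μ / 4 * ‖v‖ ≤ ‖g' x v‖ := by
    intro v
    have hnear : ‖g' xbar - g' x‖ ≤ L_H * ‖x - xbar‖ := by
      simpa only [norm_sub_rev xbar x] using hLipH xbar x
    exact (mul_le_mul_of_nonneg_right (by linarith) (norm_nonneg v)).trans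
      ((g' xbar).sub_mul_norm_le_norm_apply hsv hnear v)
  have htaylor : ‖g xbar - g x - g' x (xbar - x)‖ ≤ L_H * ‖x - xbar‖ ^ 2 := by
    simpa only [norm_sub_rev xbar x] using
      norm_image_sub_sub_fderiv_le_of_lipschitz hLH hg hLipH x xbar
  have hgx : ‖g x‖ ≤ L_G * ‖x - xbar‖ := by simpa only [hxbar, sub_zero] using hLipG x xbar
  have hres : ω₂ * ‖g x‖ ^ 2 ≤ ω₂ * L_G ^ 2 * ‖x - xbar‖ ^ 2 := by
    rw [mul_assoc, ← mul_pow]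
    exact mul_le_mul_of_nonneg_left (pow_le_pow_left₀ (norm_nonneg _) hgx 2) hω
  linarith [mul_norm_add_sub_le_of_map_eq_zero (x := x) (u := u) hcoerc hxbar]

end

theorem inexact_newton_quadratic_convergence_near_critical_point_general
    {d : ℕ} (f : EuclideanSpace ℝ (Fin d) → ℝ)
    (Hf : EuclideanSpace ℝ (Fin d) → EuclideanSpace ℝ (Fin d) →L[ℝ] EuclideanSpace ℝ (Fin d))
    (L_G L_H μ ω₂ : ℝ) (hLG : 0 < L_G) (hLH : 0 < L_H) (hμ : 0 < μ) (hω : 0 < ω₂)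
    (hHf : ∀ x, HasFDerivAt (gradient f) (Hf x) x)
    (hLipG : ∀ x y, ‖gradient f x - gradient f y‖ ≤ L_G * ‖x - y‖)
    (hLipH : ∀ x y, ‖Hf x - Hf y‖ ≤ L_H * ‖x - y‖)
    (xbar : EuclideanSpace ℝ (Fin d)) (hcrit : gradient f xbar = 0)
    (hsv : ∀ u, μ * ‖u‖ ≤ ‖Hf xbar u‖)
    (R : ℝ) (hR : 0 < R)
    (hRle : R ≤ min (μ ^ 2 / (4 * L_H * L_G)) (μ / (8 * ω₂ * L_G ^ 2)))
    (x u xplus : EuclideanSpace ℝ (Fin d)) (hx : ‖x - xbar‖ ≤ R)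
    (hu : ‖Hf x u + gradient f x‖ ≤ ω₂ * ‖gradient f x‖ ^ 2)
    (hxplus : xplus = x + u) :
    ‖xplus - xbar‖ ≤ ‖x - xbar‖ ^ 2 / (2 * R) ∧
    ‖x - xbar‖ ^ 2 / (2 * R) ≤ ‖x - xbar‖ / 2 ∧
    ‖x - xbar‖ / 2 ≤ R / 2 := by
  subst hxplus
  obtain ⟨hR1, hR2⟩ := le_min_iff.mp hRle
  rw [le_div_iff₀ (by positivity)] at hR1 hR2
  have hhalf : ‖x - xbar‖ ^ 2 / (2 * R) ≤ ‖x - xbar‖ / 2 := by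
    rw [div_le_div_iff₀ (by positivity) two_pos]
    nlinarith [norm_nonneg (x - xbar)]
  refine ⟨?_, hhalf, by linarith⟩
  rcases eq_or_ne (x + u - xbar) 0 with hzero | hnonzero
  · rw [hzero, norm_zero]
    positivity
  -- `μ ≤ ‖Hf xbar‖` fails in dimension `0`, where the error is necessarily zero.
  have : Nontrivial (EuclideanSpace ℝ (Fin d)) := ⟨⟨_, 0, hnonzero⟩⟩
  have hμLG : μ ≤ L_G := ((Hf xbar).le_opNorm_of_forall_mul_norm_le hsv).trans
    ((hHf xbar).le_of_lip' hLG.le (.of_forall fun y => hLipG y xbar))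
  have hLHR : 4 * L_H * R ≤ μ := by nlinarith [mul_le_mul_of_nonneg_left hμLG hμ.le]
  have hstep := mul_norm_inexact_newton_step_sub_le hLH.le hHf hLipG hLipH hcrit hsv
    (by nlinarith [mul_le_mul_of_nonneg_left hx hLH.le]) hu hω.le
  have hrate : 2 * R * (L_H + ω₂ * L_G ^ 2) ≤ 3 * μ / 4 := by nlinarith
  rw [le_div_iff₀ (by positivity)]
  refine le_of_mul_le_mul_left ?_ (by positivity : 0 < 3 * μ / 4)
  calc 3 * μ / 4 * (‖x + u - xbar‖ * (2 * R))
      = 2 * R * (3 * μ / 4 * ‖x + u - xbar‖) := by ring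
    _ ≤ 2 * R * ((L_H + ω₂ * L_G ^ 2) * ‖x - xbar‖ ^ 2) :=
      mul_le_mul_of_nonneg_left hstep (by positivity)
    _ ≤ 3 * μ / 4 * ‖x - xbar‖ ^ 2 := by
      rw [← mul_assoc]
      exact mul_le_mul_of_nonneg_right hrate (sq_nonneg _)

/-- Quadratic convergence of an inexact Newton step near a nondegenerate critical
point (Lemma `quadratic_conv_crit`). -/
theorem inexact_newton_quadratic_convergence_near_critical_point
    {d : ℕ} (f : EuclideanSpace ℝ (Fin d) → ℝ)
    (Hf : EuclideanSpace ℝ (Fin d) → EuclideanSpace ℝ (Fin d) →L[ℝ] EuclideanSpace ℝ (Fin d))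
    (L_G L_H μ ω₂ : ℝ) (hLG : 0 < L_G) (hLH : 0 < L_H) (hμ : 0 < μ) (hω : 0 < ω₂)
    (hf : ContDiff ℝ 2 f)
    (hHf : ∀ x, HasFDerivAt (gradient f) (Hf x) x)
    (hLipG : ∀ x y, ‖gradient f x - gradient f y‖ ≤ L_G * ‖x - y‖)
    (hLipH : ∀ x y, ‖Hf x - Hf y‖ ≤ L_H * ‖x - y‖)
    (xbar : EuclideanSpace ℝ (Fin d)) (hcrit : gradient f xbar = 0)
    (hsv : ∀ u, μ * ‖u‖ ≤ ‖Hf xbar u‖)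
    (R : ℝ) (hR : 0 < R)
    (hRle : R ≤ min (μ ^ 2 / (4 * L_H * L_G)) (μ / (8 * ω₂ * L_G ^ 2)))
    (x u xplus : EuclideanSpace ℝ (Fin d)) (hx : ‖x - xbar‖ ≤ R)
    (hu : ‖Hf x u + gradient f x‖ ≤ ω₂ * ‖gradient f x‖ ^ 2)
    (hxplus : xplus = x + u) :
    ‖xplus - xbar‖ ≤ ‖x - xbar‖ ^ 2 / (2 * R) ∧
    ‖x - xbar‖ ^ 2 / (2 * R) ≤ ‖x - xbar‖ / 2 ∧
    ‖x - xbar‖ / 2 ≤ R / 2 :=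
  inexact_newton_quadratic_convergence_near_critical_point_general f Hf L_G L_H μ ω₂ hLG hLH hμ hω
    hHf hLipG hLipH xbar hcrit hsv R hR hRle x u xplus hx hu hxplus
end

section
/- For all a, b > 0 and σ > 0: if σ ≤ b / log₂(2 + a/b), then σ · log₂ log₂(2 + a/σ) ≤ b. -/
/-- Core inequality: for `x ≥ 2`, `2 + (x-2)·log₂ x ≤ 2^x`. -/
lemma core_ineq (x : ℝ) (hx : 2 ≤ x) :
    2 + (x - 2) * Real.logb 2 x ≤ (2 : ℝ) ^ x := by
  have hl2 : (0.6931471803 : ℝ) < Real.log 2 := Real.log_two_gt_d9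
  have hl2' : Real.log 2 < 0.6931471808 := Real.log_two_lt_d9
  have hlpos : (0 : ℝ) < Real.log 2 := by linarith
  have hy0 : (0:ℝ) ≤ x - 2 := by linarith
  -- bound log x ≤ log 2 + (x-2)/2
  have hlogx : Real.log x ≤ Real.log 2 + (x - 2) / 2 := by
    have h1 : Real.log x = Real.log 2 + Real.log (x / 2) := by
      rw [← Real.log_mul (by norm_num) (by positivity)]
      congr 1; ring
    have h2 : Real.log (x / 2) ≤ x / 2 - 1 :=
      Real.log_le_sub_one_of_pos (by linarith)
    rw [h1]; linarith
  -- exp lower bound : exp z ≥ (1+z/6)^6 ≥ 1 + z + (15/36) z^2 for z ≥ 0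
  have hexp : ∀ z : ℝ, 0 ≤ z →
      1 + z + (15 / 36) * z ^ 2 ≤ Real.exp z := by
    intro z hz
    have h1 : (1 + z / 6) ^ 6 ≤ Real.exp z := by
      have h0 := Real.add_one_le_exp (z / 6)
      calc (1 + z / 6) ^ 6 ≤ (Real.exp (z / 6)) ^ 6 := by
            apply pow_le_pow_left₀ (by positivity) (by linarith)
        _ = Real.exp z := by
            rw [← Real.exp_nat_mul]; congr 1; push_cast; ring
    have h2 : 1 + z + (15 / 36) * z ^ 2 ≤ (1 + z / 6) ^ 6 := by
      nlinarith [pow_nonneg hz 3, pow_nonneg hz 4, pow_nonneg hz 5,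
        pow_nonneg hz 6, sq_nonneg z]
    linarith
  -- rewrite 2 ^ x
  have h2x : (2 : ℝ) ^ x = 4 * Real.exp ((x - 2) * Real.log 2) := by
    rw [Real.rpow_def_of_pos (by norm_num : (0:ℝ) < 2)]
    have e1 : Real.log 2 * x = (x - 2) * Real.log 2 + 2 * Real.log 2 := by ring
    rw [e1, Real.exp_add]
    have e2 : (2:ℝ) * Real.log 2 = Real.log 4 := by
      rw [show (4:ℝ) = 2 ^ (2:ℕ) by norm_num, Real.log_pow]; push_cast; ring
    rw [e2, Real.exp_log (by norm_num : (0:ℝ) < 4)]; ring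
  have hE : 1 + (x - 2) * Real.log 2 + (15/36) * ((x - 2) * Real.log 2) ^ 2
      ≤ Real.exp ((x - 2) * Real.log 2) := hexp _ (by positivity)
  -- logb bound (multiplied through by log 2)
  have hlogb : Real.log 2 * ((x - 2) * Real.logb 2 x) ≤
      (x - 2) * Real.log 2 + (x - 2) ^ 2 / 2 := by
    have e1 : Real.log 2 * ((x - 2) * Real.logb 2 x) = (x - 2) * Real.log x := by
      rw [Real.logb]; field_simp
    rw [e1]
    nlinarith [mul_le_mul_of_nonneg_left hlogx hy0]
  -- assemble
  rw [h2x]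
  have haux : (1:ℝ)/2 ≤ 5/3 * (Real.log 2) ^ 3 := by
    nlinarith [sq_nonneg (Real.log 2 - 0.6931471803), hlpos]
  have hE4 : 4 * Real.log 2 * (1 + (x - 2) * Real.log 2
        + (15/36) * ((x - 2) * Real.log 2) ^ 2)
      ≤ 4 * Real.log 2 * Real.exp ((x - 2) * Real.log 2) :=
    mul_le_mul_of_nonneg_left hE (by positivity)
  have hy2 : (x - 2) ^ 2 / 2 ≤ 5/3 * (x - 2) ^ 2 * (Real.log 2) ^ 3 := by
    nlinarith [mul_le_mul_of_nonneg_left haux (sq_nonneg (x - 2))]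
  have hy1 : (x - 2) * Real.log 2 ≤ 4 * (x - 2) * (Real.log 2) ^ 2 := by
    nlinarith [mul_nonneg (mul_nonneg hy0 hlpos.le)
      (show (0:ℝ) ≤ 4 * Real.log 2 - 1 by linarith)]
  have final : Real.log 2 * (2 + (x - 2) * Real.logb 2 x)
      ≤ Real.log 2 * (4 * Real.exp ((x - 2) * Real.log 2)) := by
    nlinarith [hlogb, hE4, hy2, hy1, hlpos]
  exact le_of_mul_le_mul_left final hlpos

/-- Lemma `sigma_loglog`: if `σ ≤ b / log₂(2 + a/b)` then
`σ·log₂log₂(2 + a/σ) ≤ b`. -/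
theorem sigma_loglog (a b σ : ℝ) (ha : 0 < a) (hb : 0 < b) (hσ : 0 < σ)
    (h : σ ≤ b / Real.logb 2 (2 + a / b)) :
    σ * Real.logb 2 (Real.logb 2 (2 + a / σ)) ≤ b := by
  have ht : 0 < a / b := by positivity
  set t : ℝ := a / b with htdef
  have hL1 : 1 ≤ Real.logb 2 (2 + t) := by
    have h1 : (2:ℝ) ^ (1:ℝ) ≤ 2 + t := by rw [Real.rpow_one]; linarith
    exact (Real.le_logb_iff_rpow_le (by norm_num) (by linarith)).mpr h1
  have hL0 : 0 < Real.logb 2 (2 + t) := by linarith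
  have hσL : σ * Real.logb 2 (2 + t) ≤ b := by
    rw [le_div_iff₀ hL0] at h; exact h
  set s : ℝ := b / σ with hsdef
  have hsL : Real.logb 2 (2 + t) ≤ s := by
    rw [hsdef, le_div_iff₀ hσ]; nlinarith
  have hs1 : 1 ≤ s := le_trans hL1 hsL
  have hts : a / σ = t * s := by
    rw [htdef, hsdef]; field_simp
  have h2L : (2:ℝ) ^ Real.logb 2 (2 + t) = 2 + t :=
    Real.rpow_logb (by norm_num) (by norm_num) (by linarith)
  have ht2s : 2 + t ≤ (2:ℝ) ^ s := by
    rw [← h2L]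
    exact Real.rpow_le_rpow_of_exponent_le (by norm_num) hsL
  have hx2 : (2:ℝ) ≤ (2:ℝ) ^ s := by
    calc (2:ℝ) = (2:ℝ) ^ (1:ℝ) := (Real.rpow_one 2).symm
      _ ≤ (2:ℝ) ^ s := Real.rpow_le_rpow_of_exponent_le (by norm_num) hs1
  have hchain : 2 + t * s ≤ (2:ℝ) ^ ((2:ℝ) ^ s) := by
    have h1 : 2 + t * s ≤ 2 + ((2:ℝ) ^ s - 2) * s := by nlinarith
    have h2 := core_ineq ((2:ℝ) ^ s) hx2
    rw [Real.logb_rpow (by norm_num) (by norm_num)] at h2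
    linarith
  have hpos : (0:ℝ) < 2 + t * s := by nlinarith
  have hlog1 : Real.logb 2 (2 + t * s) ≤ (2:ℝ) ^ s :=
    (Real.logb_le_iff_le_rpow (by norm_num) hpos).mpr hchain
  have hlogpos : 0 < Real.logb 2 (2 + t * s) := by
    apply Real.logb_pos (by norm_num); nlinarith
  have hlog2 : Real.logb 2 (Real.logb 2 (2 + t * s)) ≤ s :=
    (Real.logb_le_iff_le_rpow (by norm_num) hlogpos).mpr hlog1
  rw [hts]
  calc σ * Real.logb 2 (Real.logb 2 (2 + t * s))
      ≤ σ * s := by apply mul_le_mul_of_nonneg_left hlog2 hσ.le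
    _ = b := by rw [hsdef]; field_simp
end

section
/- Let f(x) = cos(x_d) - 1 + (1/2)·Σ_{i=1}^{d-1} x_i². Then: (i) ∇f and ∇²f are 1-Lipschitz; (ii) the critical points of f are exactly the points (0,…,0,kπ) for k ∈ ℤ, and at each critical point all eigenvalues of the Hessian have absolute value at least 1 (the μ-Morse property with μ=1); (iii) inf f = -2; (iv) the origin is a saddle point with f(0) = 0; (v) for every x ∈ ℝ^d, the distance from x to the nearest critical point is at most (π/2)·‖∇f(x)‖. -/
open RealInnerProductSpace

/-! Up to a constant, `f x = ½‖x‖² - ½ x_d² + cos x_d`, so `∇f x = x - (x_d + sin x_d) e_d` and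
`∇²f x = I - (1 + cos x_d) e_d e_dᵀ`; every claim reduces to a fact about `sin` and `cos` in the
last coordinate. At a critical point `sin x_d = 0`, hence `cos x_d = ±1` and the Hessian has
eigenvalues `1` and `∓1`. For the distance bound, round `x_d / π` to the nearest integer `k`:
Jordan's inequality `(2/π)|s| ≤ |sin s|` on `|s| ≤ π/2`, applied to `s = x_d - kπ`, controls the
last coordinate of `x - kπ e_d`; the other coordinates agree with those of `∇f x`, and `π/2 ≥ 1`. -/

open Real

theorem EuclideanSpace.norm_le_norm_of_forall_abs_le {ι : Type*} [Fintype ι]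
    {a b : EuclideanSpace ℝ ι} (h : ∀ i, |a i| ≤ |b i|) : ‖a‖ ≤ ‖b‖ := by
  rw [← sq_le_sq₀ (norm_nonneg _) (norm_nonneg _), EuclideanSpace.real_norm_sq_eq,
    EuclideanSpace.real_norm_sq_eq]
  exact Finset.sum_le_sum fun i _ ↦ sq_le_sq.2 (h i)

theorem Real.exists_int_abs_sub_mul_pi_le (t : ℝ) :
    ∃ k : ℤ, |t - k * π| ≤ π / 2 * |sin t| := by
  refine ⟨round (t / π), ?_⟩
  set s := t - round (t / π) * π
  have hs : |s| ≤ π / 2 := by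
    calc |s| = |t / π - round (t / π)| * π := by
          rw [← abs_of_pos pi_pos, ← abs_mul, abs_of_pos pi_pos, sub_mul,
            div_mul_cancel₀ _ pi_ne_zero]
      _ ≤ 1 / 2 * π := by gcongr; exact abs_sub_round _
      _ = π / 2 := by ring
  have hjordan := mul_abs_le_abs_sin hs
  rw [sin_sub_int_mul_pi, abs_mul, abs_neg_one_zpow, one_mul] at hjordan
  calc |s| = π / 2 * (2 / π * |s|) := by field_simp
    _ ≤ π / 2 * |sin t| := by gcongr

namespace WorstCase

variable {ι : Type*} [DecidableEq ι] {j : ι}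

local notation "E" => EuclideanSpace ℝ ι

noncomputable def grad (j : ι) (x : E) : E :=
  x - (x j + sin (x j)) • EuclideanSpace.single j 1

theorem grad_apply (x : E) (i : ι) :
    grad j x i = if i = j then -sin (x j) else x i := by
  by_cases h : i = j
  · subst h; simp [grad]
  · simp [grad, h]

theorem grad_zero : grad j 0 = 0 := by
  simp [grad]

theorem grad_eq_zero_iff (x : E) :
    grad j x = 0 ↔ ∃ k : ℤ, x = EuclideanSpace.single j (k * π) := by
  constructor
  · intro h
    have hcoord (i : ι) : grad j x i = 0 := by rw [h]; rfl
    obtain ⟨k, hk⟩ := sin_eq_zero_iff.1 (by simpa [grad_apply] using hcoord j)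
    refine ⟨k, ?_⟩
    ext i
    by_cases hi : i = j
    · subst hi; simp [hk]
    · simpa [grad_apply, hi] using hcoord i
  · rintro ⟨k, rfl⟩
    ext i
    by_cases hi : i = j
    · subst hi; simp [grad_apply, sin_int_mul_pi]
    · simp [grad_apply, hi]

variable [Fintype ι]

noncomputable def func (j : ι) (x : E) : ℝ :=
  cos (x j) - 1 + (1 / 2) * ∑ i ∈ Finset.univ.erase j, (x i) ^ 2

noncomputable def hess (j : ι) (x : E) : E →L[ℝ] E :=
  ContinuousLinearMap.id ℝ E -
    ((1 + cos (x j)) • EuclideanSpace.proj j).smulRight (EuclideanSpace.single j 1)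

theorem hess_apply (x u : E) (i : ι) :
    hess j x u i = if i = j then -(cos (x j) * u j) else u i := by
  by_cases h : i = j
  · subst h
    simp only [hess, sub_apply, ContinuousLinearMap.id_apply,
      ContinuousLinearMap.smulRight_apply, smul_apply, PiLp.proj_apply,
      smul_eq_mul, PiLp.sub_apply, PiLp.smul_apply, PiLp.single_eq_same, mul_one, ↓reduceIte]
    ring
  · simp [hess, h]

theorem func_eq_norm_sq :
    func j = fun x : E ↦ cos (x j) - 1 + (1 / 2) * (‖x‖ ^ 2 - x j ^ 2) := by
  funext x
  rw [func, EuclideanSpace.real_norm_sq_eq, ← Finset.sum_erase_add _ _ (Finset.mem_univ j)]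
  ring

theorem hasGradientAt_func (x : E) : HasGradientAt (func j) (grad j x) x := by
  have hproj : HasFDerivAt (fun y : E ↦ y j) (EuclideanSpace.proj j : E →L[ℝ] ℝ) x :=
    (EuclideanSpace.proj (𝕜 := ℝ) j).hasFDerivAt
  have h := (((hasDerivAt_cos (x j)).comp_hasFDerivAt x hproj).sub_const 1).add
    (((hasStrictFDerivAt_norm_sq x).hasFDerivAt.sub (hproj.pow 2)).const_mul (1 / 2))
  rw [hasGradientAt_iff_hasFDerivAt, func_eq_norm_sq]
  refine h.congr_fderiv ?_
  ext u
  simp only [neg_smul, one_div, Nat.add_one_sub_one, pow_one, nsmul_eq_mul, Nat.cast_ofNat,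
    add_apply, neg_apply, smul_apply,
    PiLp.proj_apply, smul_eq_mul, sub_apply, coe_innerSL_apply, grad, map_sub,
    map_smul, InnerProductSpace.toDual_apply_apply, EuclideanSpace.inner_single_left,
    RCLike.conj_to_real, one_mul]
  ring

theorem gradient_func : gradient (func j) = grad j :=
  funext fun x ↦ (hasGradientAt_func x).gradient

theorem hasFDerivAt_grad (x : E) : HasFDerivAt (grad j) (hess j x) x := by
  have hproj : HasFDerivAt (fun y : E ↦ y j) (EuclideanSpace.proj j : E →L[ℝ] ℝ) x :=
    (EuclideanSpace.proj (𝕜 := ℝ) j).hasFDerivAt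
  have h := (hasFDerivAt_id x).sub
    ((hproj.add ((hasDerivAt_sin (x j)).comp_hasFDerivAt x hproj)).smul_const
      (EuclideanSpace.single j (1 : ℝ)))
  refine h.congr_fderiv ?_
  ext u
  simp [hess, add_smul]

theorem fderiv_grad (x : E) : fderiv ℝ (grad j) x = hess j x :=
  (hasFDerivAt_grad x).fderiv

theorem lipschitzWith_grad : LipschitzWith 1 (grad j) := by
  refine LipschitzWith.of_dist_le_mul fun x y ↦ ?_
  rw [NNReal.coe_one, one_mul, dist_eq_norm, dist_eq_norm]
  refine EuclideanSpace.norm_le_norm_of_forall_abs_le fun i ↦ ?_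
  simp only [PiLp.sub_apply, grad_apply]
  split_ifs with h
  · subst h
    rw [neg_sub_neg, abs_sub_comm]
    exact abs_sin_sub_sin_le _ _
  · rfl

theorem hess_sub_hess_apply (x y u : E) :
    (hess j x - hess j y) u = ((cos (y j) - cos (x j)) * u j) • EuclideanSpace.single j 1 := by
  ext i
  by_cases h : i = j
  · subst h
    simp only [sub_apply, PiLp.sub_apply, hess_apply, ↓reduceIte,
      sub_neg_eq_add, PiLp.smul_apply, PiLp.single_eq_same, smul_eq_mul, mul_one]
    ring
  · simp [hess_apply, h]

theorem norm_hess_sub_hess_le (x y : E) : ‖hess j x - hess j y‖ ≤ ‖x - y‖ := by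
  refine ContinuousLinearMap.opNorm_le_bound _ (norm_nonneg _) fun u ↦ ?_
  rw [hess_sub_hess_apply, norm_smul, PiLp.norm_single, norm_one, mul_one, norm_mul]
  calc ‖cos (y j) - cos (x j)‖ * ‖u j‖ ≤ ‖(x - y) j‖ * ‖u‖ := by
        gcongr
        · rw [Real.norm_eq_abs, Real.norm_eq_abs, PiLp.sub_apply, abs_sub_comm]
          exact abs_cos_sub_cos_le _ _
        · exact PiLp.norm_apply_le _ _
    _ ≤ ‖x - y‖ * ‖u‖ := by gcongr; exact PiLp.norm_apply_le _ _

theorem eq_one_or_eq_neg_cos_of_hess_apply_eq_smul {x v : E} {ρ : ℝ} (hv : v ≠ 0)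
    (h : hess j x v = ρ • v) : ρ = 1 ∨ ρ = -cos (x j) := by
  obtain ⟨i, hi⟩ : ∃ i, v i ≠ 0 := by
    by_contra! h0
    exact hv (by ext i; exact h0 i)
  have hcoord := congrArg (· i) h
  simp only [hess_apply, PiLp.smul_apply, smul_eq_mul] at hcoord
  split_ifs at hcoord with hij
  · subst hij
    exact Or.inr (mul_right_cancel₀ hi (by linarith))
  · exact Or.inl (mul_right_cancel₀ hi (by linarith))

theorem one_le_abs_of_hess_apply_eq_smul {x v : E} {ρ : ℝ} (hx : grad j x = 0) (hv : v ≠ 0)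
    (h : hess j x v = ρ • v) : 1 ≤ |ρ| := by
  have hsin : sin (x j) = 0 := by simpa [grad_apply] using congrArg (· j) hx
  rcases eq_one_or_eq_neg_cos_of_hess_apply_eq_smul hv h with rfl | rfl
  · simp
  · rcases sin_eq_zero_iff_cos_eq.1 hsin with hcos | hcos <;> simp [hcos]

theorem isLeast_range_func : IsLeast (Set.range (func j)) (-2) := by
  refine ⟨⟨EuclideanSpace.single j π, by norm_num [func_eq_norm_sq]⟩, ?_⟩
  rintro _ ⟨x, rfl⟩
  have hsum : 0 ≤ ∑ i ∈ Finset.univ.erase j, x i ^ 2 := Finset.sum_nonneg fun i _ ↦ sq_nonneg _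
  have hcos := neg_one_le_cos (x j)
  rw [func]
  linarith

theorem func_zero : func j 0 = 0 := by
  simp [func]

theorem hess_zero_apply_single :
    hess j 0 (EuclideanSpace.single j 1) = (-1 : ℝ) • EuclideanSpace.single j 1 := by
  ext i
  by_cases hi : i = j
  · subst hi; simp [hess_apply]
  · simp [hess_apply, hi]

theorem exists_grad_eq_zero_norm_sub_le (x : E) :
    ∃ xbar, grad j xbar = 0 ∧ ‖x - xbar‖ ≤ π / 2 * ‖grad j x‖ := by
  obtain ⟨k, hk⟩ := exists_int_abs_sub_mul_pi_le (x j)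
  refine ⟨EuclideanSpace.single j (k * π), (grad_eq_zero_iff _).2 ⟨k, rfl⟩, ?_⟩
  have hpi : 0 < π / 2 := by positivity
  rw [← abs_of_pos hpi, ← Real.norm_eq_abs, ← norm_smul]
  refine EuclideanSpace.norm_le_norm_of_forall_abs_le fun i ↦ ?_
  simp only [PiLp.sub_apply, PiLp.smul_apply, grad_apply, PiLp.single_apply, smul_eq_mul]
  split_ifs with hi
  · subst hi
    rwa [abs_mul, abs_neg, abs_of_pos hpi]
  · rw [sub_zero, abs_mul, abs_of_pos hpi]
    exact le_mul_of_one_le_left (abs_nonneg _) (by linarith [pi_gt_three])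

end WorstCase

theorem worst_case_function_properties_general
    {d : ℕ}
    (last : Fin d)
    (f : EuclideanSpace ℝ (Fin d) → ℝ)
    (hf : ∀ x, f x = Real.cos (x last) - 1
      + (1 / 2) * ∑ i ∈ Finset.univ.erase last, (x i) ^ 2) :
    LipschitzWith 1 (gradient f) ∧
    (∀ x y : EuclideanSpace ℝ (Fin d),
      ‖fderiv ℝ (gradient f) x - fderiv ℝ (gradient f) y‖ ≤ ‖x - y‖) ∧
    ({x : EuclideanSpace ℝ (Fin d) | gradient f x = 0}
      = {x | ∃ k : ℤ, x = EuclideanSpace.single last ((k : ℝ) * Real.pi)}) ∧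
    (∀ xbar : EuclideanSpace ℝ (Fin d), gradient f xbar = 0 →
      ∀ (ρ : ℝ) (v : EuclideanSpace ℝ (Fin d)), v ≠ 0 →
        fderiv ℝ (gradient f) xbar v = ρ • v → 1 ≤ |ρ|) ∧
    IsLeast (Set.range f) (-2) ∧
    (f 0 = 0 ∧ gradient f 0 = 0 ∧
      ∃ (ρ : ℝ) (v : EuclideanSpace ℝ (Fin d)), v ≠ 0 ∧ ρ < 0 ∧
        fderiv ℝ (gradient f) 0 v = ρ • v) ∧
    (∀ x : EuclideanSpace ℝ (Fin d), ∃ xbar, gradient f xbar = 0 ∧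
      ‖x - xbar‖ ≤ Real.pi / 2 * ‖gradient f x‖) := by
  obtain rfl : f = WorstCase.func last := funext hf
  simp only [WorstCase.gradient_func, WorstCase.fderiv_grad]
  refine ⟨WorstCase.lipschitzWith_grad, WorstCase.norm_hess_sub_hess_le,
    Set.ext WorstCase.grad_eq_zero_iff,
    fun _ hx _ _ hv h ↦ WorstCase.one_le_abs_of_hess_apply_eq_smul hx hv h,
    WorstCase.isLeast_range_func,
    ⟨WorstCase.func_zero, WorstCase.grad_zero, -1, EuclideanSpace.single last 1,
      by simp [PiLp.single_eq_zero_iff], by norm_num, WorstCase.hess_zero_apply_single⟩,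
    WorstCase.exists_grad_eq_zero_norm_sub_le⟩

/-- Properties of the worst-case function `f(x) = cos(x_d) - 1 + ½Σ_{i<d} x_i²`:
(i) its gradient and Hessian are 1-Lipschitz; (ii) its critical points are exactly
the points `(0,…,0,kπ)`, `k ∈ ℤ`, and there all Hessian eigenvalues have absolute
value at least 1 (the 1-Morse property); (iii) its minimum value is `-2`;
(iv) the origin is a saddle point with value `0`; (v) every point is within
distance `(π/2)‖∇f(x)‖` of a critical point. -/
theorem worst_case_function_properties
    {d : ℕ} (hd : 0 < d)
    (last : Fin d) (hlast : (last : ℕ) = d - 1)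
    (f : EuclideanSpace ℝ (Fin d) → ℝ)
    (hf : ∀ x, f x = Real.cos (x last) - 1
      + (1 / 2) * ∑ i ∈ Finset.univ.erase last, (x i) ^ 2) :
    LipschitzWith 1 (gradient f) ∧
    (∀ x y : EuclideanSpace ℝ (Fin d),
      ‖fderiv ℝ (gradient f) x - fderiv ℝ (gradient f) y‖ ≤ ‖x - y‖) ∧
    ({x : EuclideanSpace ℝ (Fin d) | gradient f x = 0}
      = {x | ∃ k : ℤ, x = EuclideanSpace.single last ((k : ℝ) * Real.pi)}) ∧
    (∀ xbar : EuclideanSpace ℝ (Fin d), gradient f xbar = 0 →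
      ∀ (ρ : ℝ) (v : EuclideanSpace ℝ (Fin d)), v ≠ 0 →
        fderiv ℝ (gradient f) xbar v = ρ • v → 1 ≤ |ρ|) ∧
    IsLeast (Set.range f) (-2) ∧
    (f 0 = 0 ∧ gradient f 0 = 0 ∧
      ∃ (ρ : ℝ) (v : EuclideanSpace ℝ (Fin d)), v ≠ 0 ∧ ρ < 0 ∧
        fderiv ℝ (gradient f) 0 v = ρ • v) ∧
    (∀ x : EuclideanSpace ℝ (Fin d), ∃ xbar, gradient f xbar = 0 ∧
      ‖x - xbar‖ ≤ Real.pi / 2 * ‖gradient f x‖) :=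
  worst_case_function_properties_general last f hf
end
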